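/- Under the event V of the score-density lower bound proposition and with m > 4/(f_min β): for any u ∈ [0, β/4], if sup_s |F_{S|ϑ_n}(s) − F̂^{(m)}_{S|ϑ_n}(s)| ≤ 2 f_min u, then |q̂_{(1−α)_m}(S_m | ϑ_n) − q_{(1−α)_m}(S | ϑ_n)| ≤ u. -/

import Mathlib

open MeasureTheory ProbabilityTheory Real Filter Set
open scoped RealInnerProductSpace ENNReal

noncomputable section

/-- The lower `p`-quantile of a cdf-like function `F`: `inf {u | F u ≥ p}`. -/
def quantileOf (F : ℝ → ℝ) (p : ℝ) : ℝ := sInf {u : ℝ | p ≤ F u}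

/-- The calibration quantile level `(1-α)_m = ⌈(1-α)(m+1)⌉ / m`. -/
def calLevel (α : ℝ) (m : ℕ) : ℝ := (⌈(1 - α) * ((m : ℝ) + 1)⌉₊ : ℝ) / (m : ℝ)

/-- The empirical cdf of `m` scores. -/
def empCDF {m : ℕ} (s : Fin m → ℝ) (t : ℝ) : ℝ :=
  (∑ j, if s j ≤ t then (1 : ℝ) else 0) / (m : ℝ)

/-- The empirical `p`-quantile: the smallest of the scores at which the empirical cdf
reaches level `p` (for `p = (1-α)_m` this is the `⌈(1-α)(m+1)⌉`-th smallest score). -/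
def empQuantile {m : ℕ} (s : Fin m → ℝ) (p : ℝ) : ℝ :=
  sInf {t : ℝ | t ∈ Set.range s ∧ p ≤ empCDF s t}

/-- `β = min{α, 1-α} / (2 fmax)`. -/
def betaConst (α fmax : ℝ) : ℝ := min α (1 - α) / (2 * fmax)

/-- `A = 4 λmax² fmax d / (λmin⁴ fmin²)`. -/
def Aconst (lmin lmax fmin fmax : ℝ) (d : ℕ) : ℝ :=
  4 * lmax ^ 2 * fmax * (d : ℝ) / (lmin ^ 4 * fmin ^ 2)

lemma FS_diff {FS fS : ℝ → ℝ} (hfSint : ∀ u : ℝ, IntegrableOn fS (Iic u))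
    (hFSfS : ∀ u : ℝ, FS u = ∫ s in Iic u, fS s) {a b : ℝ} (hab : a ≤ b) :
    FS b - FS a = ∫ s in Ioc a b, fS s := by
  have h1 : IntegrableOn fS (Iic a) := hfSint a
  have h2 : IntegrableOn fS (Ioc a b) := (hfSint b).mono_set Ioc_subset_Iic_self
  rw [hFSfS, hFSfS, ← Set.Iic_union_Ioc_eq_Iic hab,
    setIntegral_union (Set.Iic_disjoint_Ioc le_rfl) measurableSet_Ioc h1 h2]
  ring

lemma FS_mono {FS fS : ℝ → ℝ} (hfS0 : ∀ s : ℝ, 0 ≤ fS s)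
    (hfSint : ∀ u : ℝ, IntegrableOn fS (Iic u))
    (hFSfS : ∀ u : ℝ, FS u = ∫ s in Iic u, fS s) : Monotone FS := by
  intro a b hab
  have h := FS_diff hfSint hFSfS hab
  have h0 : 0 ≤ ∫ s in Ioc a b, fS s :=
    setIntegral_nonneg measurableSet_Ioc (fun x _ => hfS0 x)
  linarith

lemma FS_incr {FS fS : ℝ → ℝ} (hfS0 : ∀ s : ℝ, 0 ≤ fS s)
    (hfSint : ∀ u : ℝ, IntegrableOn fS (Iic u))
    (hFSfS : ∀ u : ℝ, FS u = ∫ s in Iic u, fS s) {c : ℝ} (hc : 0 ≤ c)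
    {a b : ℝ} (hab : a ≤ b) (hlow : ∀ x ∈ Set.Ioc a b, c ≤ fS x) :
    c * (b - a) ≤ FS b - FS a := by
  rw [FS_diff hfSint hFSfS hab]
  have hconst : ∫ _ in Ioc a b, c = c * (b - a) := by
    rw [setIntegral_const, measureReal_def, Real.volume_Ioc, ENNReal.toReal_ofReal (by linarith), smul_eq_mul]
    ring
  rw [← hconst]
  exact setIntegral_mono_on
    (integrableOn_const (by rw [Real.volume_Ioc]; exact ENNReal.ofReal_ne_top))
    ((hfSint b).mono_set Ioc_subset_Iic_self) measurableSet_Ioc hlow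

lemma FS_cont {FS fS : ℝ → ℝ} (hfSint : ∀ u : ℝ, IntegrableOn fS (Iic u))
    (hFSfS : ∀ u : ℝ, FS u = ∫ s in Iic u, fS s) : Continuous FS := by
  have hint : ∀ a b : ℝ, IntervalIntegrable fS volume a b := fun a b =>
    ⟨(hfSint b).mono_set Ioc_subset_Iic_self, (hfSint a).mono_set Ioc_subset_Iic_self⟩
  have heq : FS = fun u => FS 0 + ∫ x in (0:ℝ)..u, fS x := by
    funext u
    rcases le_total 0 u with h | h
    · rw [intervalIntegral.integral_of_le h]
      have := FS_diff hfSint hFSfS h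
      linarith
    · rw [intervalIntegral.integral_of_ge h]
      have := FS_diff hfSint hFSfS h
      linarith
  rw [heq]
  exact continuous_const.add (intervalIntegral.continuous_primitive hint 0)

lemma quantile_spec {FS : ℝ → ℝ} (hmono : Monotone FS) (hcont : Continuous FS)
    (hFS0 : Tendsto FS atBot (nhds 0)) {p r : ℝ} (hp : 0 < p) (hr : p ≤ FS r) :
    FS (quantileOf FS p) = p ∧ quantileOf FS p ≤ r ∧ BddBelow {u : ℝ | p ≤ FS u} := by
  set S := {u : ℝ | p ≤ FS u} with hS
  have hne : S.Nonempty := ⟨r, hr⟩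
  have hbdd : BddBelow S := by
    have hev : ∀ᶠ x in atBot, FS x < p := hFS0.eventually (eventually_lt_nhds hp)
    rw [eventually_atBot] at hev
    obtain ⟨B, hB⟩ := hev
    refine ⟨B, fun x hx => ?_⟩
    by_contra h
    push_neg at h
    exact absurd hx (not_le.2 (hB x h.le))
  have hcl : IsClosed S := isClosed_Ici.preimage hcont
  have hqmem : sInf S ∈ S := hcl.csInf_mem hne hbdd
  have hle : FS (sInf S) ≤ p := by
    by_contra h
    push_neg at h
    have htend : Tendsto FS (nhdsWithin (sInf S) (Iio (sInf S))) (nhds (FS (sInf S))) :=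
      (hcont.tendsto (sInf S)).mono_left nhdsWithin_le_nhds
    obtain ⟨t, htp, htlt⟩ :=
      ((htend.eventually (eventually_gt_nhds h)).and eventually_mem_nhdsWithin).exists
    exact absurd (csInf_le hbdd (le_of_lt htp : p ≤ FS t)) (not_le.2 htlt)
  exact ⟨le_antisymm hle hqmem, csInf_le hbdd hr, hbdd⟩

/-- **Empirical quantile stability under the good event** (Lemma B.11): let the score
have cdf `FS` with density `fS` and let `F̂` be the empirical cdf of `m` calibration
scores. Under the event `V` (`fS(s) ≥ 2 fmin` for `|s| < β - ε_n` and
`|q_{1-α}| ≤ ε_n < β/4`) and if `m > 4/(fmin β)`, then for any `u ∈ [0, β/4]`,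
if `sup_s |FS(s) - F̂(s)| ≤ 2 fmin u`, then
`|q̂_{(1-α)_m} - q_{(1-α)_m}| ≤ u`. -/
theorem empirical_score_quantile_stability
    (FS fS : ℝ → ℝ)
    (hfS0 : ∀ s : ℝ, 0 ≤ fS s)
    (hfSint : ∀ u : ℝ, IntegrableOn fS (Iic u))
    (hFSfS : ∀ u : ℝ, FS u = ∫ s in Iic u, fS s)
    (hFS0 : Tendsto FS atBot (nhds 0)) (hFS1 : Tendsto FS atTop (nhds 1))
    (α fmin fmax : ℝ) (hα : α ∈ Ioo (0 : ℝ) 1)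
    (hfmin : 0 < fmin) (hfminmax : fmin ≤ fmax)
    (εn : ℝ) (hεβ : εn < betaConst α fmax / 4)
    (hV1 : ∀ s : ℝ, |s| < betaConst α fmax - εn → 2 * fmin ≤ fS s)
    (hV2 : |quantileOf FS (1 - α)| ≤ εn)
    (m : ℕ) (hm : (m : ℝ) > 4 / (fmin * betaConst α fmax))
    (s : Fin m → ℝ) :
    ∀ u ∈ Icc (0 : ℝ) (betaConst α fmax / 4),
      (∀ t : ℝ, |FS t - empCDF s t| ≤ 2 * fmin * u) →
      |empQuantile s (calLevel α m) - quantileOf FS (calLevel α m)| ≤ u := by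
  intro u hu hsup
  obtain ⟨hu0, hu4⟩ := hu
  obtain ⟨hα0, hα1⟩ := hα
  set β := betaConst α fmax with hβdef
  have hfmax : 0 < fmax := lt_of_lt_of_le hfmin hfminmax
  have hβ : 0 < β := by
    rw [hβdef]
    have h1 : 0 < min α (1 - α) := lt_min hα0 (by linarith)
    exact div_pos h1 (by linarith)
  clear_value β
  have hεn0 : 0 ≤ εn := le_trans (abs_nonneg _) hV2
  have hmono : Monotone FS := FS_mono hfS0 hfSint hFSfS
  have hcont : Continuous FS := FS_cont hfSint hFSfS
  -- facts about m
  have hm0 : 0 < (m : ℝ) := lt_of_le_of_lt (by positivity) hm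
  have h4 : 4 < (m : ℝ) * fmin * β := by
    rw [gt_iff_lt, div_lt_iff₀ (by positivity)] at hm
    nlinarith
  -- facts about p
  set p := calLevel α m with hpdef
  have hp_ge : 1 - α ≤ p := by
    have h1 := Nat.le_ceil ((1 - α) * ((m : ℝ) + 1))
    rw [hpdef, calLevel, le_div_iff₀ hm0]
    nlinarith
  have hp_lt : p < 1 - α + 2 / m := by
    have h1 := Nat.ceil_lt_add_one (show (0:ℝ) ≤ (1 - α) * ((m : ℝ) + 1) by nlinarith)
    rw [hpdef, calLevel, div_lt_iff₀ hm0]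
    have h2 : (1 - α + 2 / (m:ℝ)) * m = (1 - α) * m + 2 := by field_simp
    rw [h2]
    nlinarith
  have hp0 : 0 < p := by linarith
  -- the (1-α)-quantile q0
  obtain ⟨r0, hr0⟩ : ∃ r0, 1 - α ≤ FS r0 := by
    obtain ⟨r0, h⟩ := (hFS1.eventually (eventually_gt_nhds (show 1 - α < 1 by linarith))).exists
    exact ⟨r0, h.le⟩
  obtain ⟨hFq0, -, hbdd0⟩ := quantile_spec hmono hcont hFS0 (show (0:ℝ) < 1 - α by linarith) hr0
  set q0 := quantileOf FS (1 - α) with hq0def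
  clear_value q0
  obtain ⟨hq0lo, hq0hi⟩ := abs_le.mp hV2
  -- the point r where FS reaches p
  set r := q0 + (p - (1 - α)) / (2 * fmin) with hrdef
  clear_value r
  have hδ0 : 0 ≤ p - (1 - α) := by linarith
  have hδlt : (p - (1 - α)) / (2 * fmin) < β / 4 := by
    rw [div_lt_div_iff₀ (by positivity) (by norm_num)]
    have h8 : 8 / (m:ℝ) < 2 * fmin * β := by
      rw [div_lt_iff₀ hm0]; nlinarith
    have h9 : (p - (1 - α)) * 4 < 8 / (m:ℝ) := by
      have : (2 / (m:ℝ)) * 4 = 8 / m := by ring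
      nlinarith
    linarith
  -- increment lower bound inside the good region
  have hincr : ∀ a b : ℝ, a ≤ b → -(β - εn) ≤ a → b < β - εn →
      2 * fmin * (b - a) ≤ FS b - FS a := by
    intro a b hab ha hb
    refine FS_incr hfS0 hfSint hFSfS (by positivity) hab (fun x hx => ?_)
    exact hV1 x (abs_lt.mpr ⟨by linarith [hx.1], by linarith [hx.2]⟩)
  have hq0low : -(β - εn) ≤ q0 := by linarith
  have hrhigh : r < β - εn := by
    have : r ≤ εn + (p - (1 - α)) / (2 * fmin) := by linarith
    linarith
  have hFSr : p ≤ FS r := by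
    have h1 := hincr q0 r (by linarith [div_nonneg hδ0 (by positivity : (0:ℝ) ≤ 2 * fmin)])
      hq0low hrhigh
    have h2 : 2 * fmin * (r - q0) = p - (1 - α) := by
      rw [hrdef]; field_simp; ring
    rw [h2] at h1
    linarith
  obtain ⟨hFq, hqler, hbddp⟩ := quantile_spec hmono hcont hFS0 hp0 hFSr
  set q := quantileOf FS p with hqdef
  clear_value q
  have hq0q : q0 ≤ q := by
    rw [hq0def, hqdef, quantileOf, quantileOf]
    exact csInf_le_csInf hbdd0 ⟨r, hFSr⟩ (fun x hx => le_trans hp_ge hx)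
  have hq_lo : -εn ≤ q := le_trans hq0lo hq0q
  have hq_hi : q ≤ εn + β / 4 := by
    have : r ≤ εn + β / 4 := by linarith
    linarith
  have hqreg : q < β - εn := by linarith
  -- upper bound: there is a score t* ≤ q + u with empCDF ≥ p
  have hqu_hi : q + u < β - εn := by linarith
  have hFSqu : p + 2 * fmin * u ≤ FS (q + u) := by
    have h1 := hincr q (q + u) (by linarith) (by linarith) hqu_hi
    have h2 : 2 * fmin * ((q + u) - q) = 2 * fmin * u := by ring
    rw [h2] at h1
    linarith
  have hempqu : p ≤ empCDF s (q + u) := by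
    have h1 := (abs_le.mp (hsup (q + u))).2
    linarith
  have hex : ∃ j, s j ≤ q + u := by
    by_contra h
    push_neg at h
    have hz : empCDF s (q + u) = 0 := by
      unfold empCDF
      rw [Finset.sum_eq_zero (fun j _ => if_neg (not_le.2 (h j))), zero_div]
    rw [hz] at hempqu
    linarith
  classical
  set Fset := (Finset.univ.filter (fun j => s j ≤ q + u)).image s with hFsetdef
  have hFne : Fset.Nonempty := by
    obtain ⟨j, hj⟩ := hex
    exact ⟨s j, Finset.mem_image_of_mem s (Finset.mem_filter.2 ⟨Finset.mem_univ j, hj⟩)⟩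
  set tstar := Fset.max' hFne with htstardef
  have htstar_le : tstar ≤ q + u := by
    obtain ⟨j, hjmem, hjeq⟩ := Finset.mem_image.mp (Fset.max'_mem hFne)
    rw [htstardef, ← hjeq]
    exact (Finset.mem_filter.mp hjmem).2
  have htstar_range : tstar ∈ Set.range s := by
    obtain ⟨j, _, hjeq⟩ := Finset.mem_image.mp (Fset.max'_mem hFne)
    exact ⟨j, hjeq⟩
  have hemp_eq : empCDF s tstar = empCDF s (q + u) := by
    unfold empCDF
    congr 1
    refine Finset.sum_congr rfl (fun j _ => ?_)
    by_cases hj : s j ≤ q + u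
    · rw [if_pos hj, if_pos (Finset.le_max' Fset (s j)
        (Finset.mem_image_of_mem s (Finset.mem_filter.2 ⟨Finset.mem_univ j, hj⟩)))]
    · rw [if_neg hj, if_neg (fun hle => hj (le_trans hle htstar_le))]
  have htstar_T : tstar ∈ {t : ℝ | t ∈ Set.range s ∧ p ≤ empCDF s t} :=
    ⟨htstar_range, by rw [hemp_eq]; exact hempqu⟩
  clear_value tstar
  clear_value Fset
  have hTbdd : BddBelow {t : ℝ | t ∈ Set.range s ∧ p ≤ empCDF s t} :=
    ((Set.finite_range s).subset (fun t ht => ht.1)).bddBelow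
  have hup : empQuantile s p ≤ q + u := by
    rw [empQuantile]
    exact le_trans (csInf_le hTbdd htstar_T) htstar_le
  have hlow : q - u ≤ empQuantile s p := by
    rw [empQuantile]
    refine le_csInf ⟨tstar, htstar_T⟩ (fun t ht => ?_)
    by_contra hlt
    push_neg at hlt
    have h1 : p - 2 * fmin * u ≤ FS t := by
      have h0 := (abs_le.mp (hsup t)).1
      linarith only [h0, ht.2]
    have hqu_lo : -(β - εn) < q - u := by linarith only [hq_lo, hu4, hεβ, hβ]
    set c := max t ((-(β - εn) + (q - u)) / 2) with hcdef
    clear_value c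
    have hcl : -(β - εn) < c := by
      rw [hcdef]; exact lt_of_lt_of_le (by linarith only [hqu_lo]) (le_max_right _ _)
    have hcu : c < q - u := by
      rw [hcdef]; exact max_lt hlt (by linarith only [hqu_lo, hlt])
    have htc : t ≤ c := by rw [hcdef]; exact le_max_left _ _
    have h2 := hincr c (q - u) hcu.le hcl.le (by linarith only [hqreg, hu0])
    have h3 := hincr (q - u) q (by linarith only [hu0]) (by linarith only [hqu_lo]) hqreg
    have h4 : FS t ≤ FS c := hmono htc
    have h5 : 2 * fmin * (q - (q - u)) = 2 * fmin * u := by ring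
    rw [h5] at h3
    have hpos : 0 < 2 * fmin * ((q - u) - c) := by
      have h6 := sub_pos.2 hcu
      positivity
    linarith only [h1, h2, h3, h4, hpos, hFq]
  rw [abs_le]
  constructor <;> linarith only [hup, hlow]
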